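/- For θ ∈ (0, π/4), with m := tan θ ∈ (0,1), the vector V(θ) := (4/π)·( (E(√(1−m²)) − m²·K(√(1−m²)))/(1−m²) , (m·(K(√(1−m²)) − E(√(1−m²))))/(1−m²) ) ∈ ℝ² equals (4/π)·∫₀^{π/2} (cos θ·cos²t, sin θ·sin²t) / √(cos²θ·cos²t + sin²θ·sin²t) dt. -/

import Mathlib

open Real

/-- The complete elliptic integral of the first kind. -/
noncomputable def ellipticK (k : ℝ) : ℝ :=
  ∫ x in (0:ℝ)..1, 1 / (Real.sqrt (1 - x ^ 2) * Real.sqrt (1 - k ^ 2 * x ^ 2))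

/-- The complete elliptic integral of the second kind. -/
noncomputable def ellipticE (k : ℝ) : ℝ :=
  ∫ x in (0:ℝ)..1, Real.sqrt (1 - k ^ 2 * x ^ 2) / Real.sqrt (1 - x ^ 2)

/-! The substitution `x = sin t` turns `K k` and `E k` into `∫₀^{π/2} Δ^{-1/2}` and
`∫₀^{π/2} Δ^{1/2}` with `Δ = 1 - k² sin² t`. For `k² = 1 - m²` and `sin θ = m cos θ` the
denominator of the integrand is `cos θ · √Δ`, and the identities `k² cos² t = Δ - (1 - k²)`,
`k² sin² t = 1 - Δ` express both components through `K` and `E`. -/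

open MeasureTheory Set intervalIntegral

/-- No integrability is needed: the change of variables formula holds for Bochner integrals
outright, so the singularity of `F` at `1` (as for `K` and `E`) costs nothing. -/
theorem integral_zero_one_eq_integral_comp_sin {E : Type*} [NormedAddCommGroup E]
    [NormedSpace ℝ E] {F G : ℝ → E} (hGF : ∀ t ∈ Ioo 0 (π / 2), G t = cos t • F (sin t)) :
    ∫ x in (0:ℝ)..1, F x = ∫ t in (0:ℝ)..(π / 2), G t := by
  have hmono : StrictMonoOn sin (Icc 0 (π / 2)) :=
    strictMonoOn_sin.mono (Icc_subset_Icc (by linarith [pi_pos]) le_rfl)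
  have himage : sin '' Ioo 0 (π / 2) = Ioo 0 1 := by
    simpa using continuous_sin.continuousOn.image_Ioo_of_strictMonoOn (by positivity) hmono
  rw [integral_of_le zero_le_one, integral_of_le (by positivity), integral_Ioc_eq_integral_Ioo,
    integral_Ioc_eq_integral_Ioo, ← himage, integral_image_eq_integral_abs_deriv_smul
      measurableSet_Ioo (fun t _ => (hasDerivAt_sin t).hasDerivWithinAt)
      (hmono.injOn.mono Ioo_subset_Icc_self)]
  refine setIntegral_congr_fun measurableSet_Ioo fun t ht => ?_
  rw [hGF t ht, abs_of_pos (cos_pos_of_mem_Ioo ⟨by linarith [ht.1, pi_pos], ht.2⟩)]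

theorem ellipticK_eq_integral_sin (k : ℝ) :
    ellipticK k = ∫ t in (0:ℝ)..(π / 2), (√(1 - k ^ 2 * sin t ^ 2))⁻¹ := by
  refine integral_zero_one_eq_integral_comp_sin fun t ht => ?_
  have hcos := cos_pos_of_mem_Ioo ⟨by linarith [ht.1, pi_pos], ht.2⟩
  rw [← cos_sq', sqrt_sq hcos.le, smul_eq_mul]
  field_simp

theorem ellipticE_eq_integral_sin (k : ℝ) :
    ellipticE k = ∫ t in (0:ℝ)..(π / 2), √(1 - k ^ 2 * sin t ^ 2) := by
  refine integral_zero_one_eq_integral_comp_sin fun t ht => ?_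
  have hcos := cos_pos_of_mem_Ioo ⟨by linarith [ht.1, pi_pos], ht.2⟩
  rw [← cos_sq', sqrt_sq hcos.le, smul_eq_mul]
  field_simp

theorem one_sub_sq_mul_sin_sq_pos {k : ℝ} (hk : k ^ 2 < 1) (t : ℝ) : 0 < 1 - k ^ 2 * sin t ^ 2 := by
  nlinarith [mul_le_of_le_one_right (sq_nonneg k) (sin_sq_le_one t)]

theorem continuous_inv_sqrt_one_sub_sq_mul_sin_sq {k : ℝ} (hk : k ^ 2 < 1) :
    Continuous fun t => (√(1 - k ^ 2 * sin t ^ 2))⁻¹ :=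
  (by fun_prop : Continuous fun t => √(1 - k ^ 2 * sin t ^ 2)).inv₀ fun t =>
    (sqrt_pos.2 (one_sub_sq_mul_sin_sq_pos hk t)).ne'

theorem sq_mul_integral_cos_sq_div {k : ℝ} (hk : k ^ 2 < 1) :
    k ^ 2 * ∫ t in (0:ℝ)..(π / 2), cos t ^ 2 / √(1 - k ^ 2 * sin t ^ 2)
      = ellipticE k - (1 - k ^ 2) * ellipticK k := by
  rw [ellipticE_eq_integral_sin, ellipticK_eq_integral_sin, ← intervalIntegral.integral_const_mul,
    ← intervalIntegral.integral_const_mul,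
    ← integral_sub (Continuous.intervalIntegrable (by fun_prop) _ _)
      ((continuous_inv_sqrt_one_sub_sq_mul_sin_sq hk).intervalIntegrable _ _ |>.const_mul _)]
  refine integral_congr fun t _ => ?_
  have hΔ := one_sub_sq_mul_sin_sq_pos hk t
  have hs := sqrt_pos.2 hΔ
  field_simp
  linear_combination -sq_sqrt hΔ.le + k ^ 2 * sin_sq_add_cos_sq t

theorem sq_mul_integral_sin_sq_div {k : ℝ} (hk : k ^ 2 < 1) :
    k ^ 2 * ∫ t in (0:ℝ)..(π / 2), sin t ^ 2 / √(1 - k ^ 2 * sin t ^ 2)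
      = ellipticK k - ellipticE k := by
  rw [ellipticE_eq_integral_sin, ellipticK_eq_integral_sin, ← intervalIntegral.integral_const_mul,
    ← integral_sub ((continuous_inv_sqrt_one_sub_sq_mul_sin_sq hk).intervalIntegrable _ _)
      (Continuous.intervalIntegrable (by fun_prop) _ _)]
  refine integral_congr fun t _ => ?_
  have hΔ := one_sub_sq_mul_sin_sq_pos hk t
  have hs := sqrt_pos.2 hΔ
  field_simp
  linear_combination sq_sqrt hΔ.le

theorem sqrt_sq_mul_cos_sq_add_sq_mul_sin_sq {c : ℝ} (hc : 0 ≤ c) (m t : ℝ) :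
    √(c ^ 2 * cos t ^ 2 + (m * c) ^ 2 * sin t ^ 2) = c * √(1 - (1 - m ^ 2) * sin t ^ 2) := by
  rw [← sqrt_sq hc, ← sqrt_mul (sq_nonneg c), sqrt_sq hc]
  congr 1
  linear_combination c ^ 2 * sin_sq_add_cos_sq t

theorem integral_mul_cos_sq_div_sqrt {c m : ℝ} (hc : 0 < c) (hm0 : m ≠ 0) (hm1 : m ^ 2 < 1) :
    ∫ t in (0:ℝ)..(π / 2), c * cos t ^ 2 / √(c ^ 2 * cos t ^ 2 + (m * c) ^ 2 * sin t ^ 2)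
      = (ellipticE √(1 - m ^ 2) - m ^ 2 * ellipticK √(1 - m ^ 2)) / (1 - m ^ 2) := by
  have hk2 : √(1 - m ^ 2) ^ 2 = 1 - m ^ 2 := sq_sqrt (by linarith)
  have h := sq_mul_integral_cos_sq_div (hk2 ▸ sub_lt_self 1 (by positivity))
  rw [hk2, sub_sub_cancel] at h
  rw [eq_div_iff (by linarith), mul_comm, ← h]
  congr 1
  refine integral_congr fun t _ => ?_
  rw [sqrt_sq_mul_cos_sq_add_sq_mul_sin_sq hc.le, mul_div_mul_left _ _ hc.ne']

theorem integral_mul_sin_sq_div_sqrt {c m : ℝ} (hc : 0 < c) (hm0 : m ≠ 0) (hm1 : m ^ 2 < 1) :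
    ∫ t in (0:ℝ)..(π / 2), m * c * sin t ^ 2 / √(c ^ 2 * cos t ^ 2 + (m * c) ^ 2 * sin t ^ 2)
      = m * (ellipticK √(1 - m ^ 2) - ellipticE √(1 - m ^ 2)) / (1 - m ^ 2) := by
  have hk2 : √(1 - m ^ 2) ^ 2 = 1 - m ^ 2 := sq_sqrt (by linarith)
  have h := sq_mul_integral_sin_sq_div (hk2 ▸ sub_lt_self 1 (by positivity))
  rw [hk2] at h
  rw [eq_div_iff (by linarith), mul_comm, ← h, ← intervalIntegral.integral_const_mul,
    ← intervalIntegral.integral_const_mul, ← intervalIntegral.integral_const_mul]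
  refine integral_congr fun t _ => ?_
  rw [sqrt_sq_mul_cos_sq_add_sq_mul_sin_sq hc.le]
  field_simp

/-- For `θ ∈ (0, π/4)` with `m = tan θ ∈ (0,1)`, the vector
`V(θ) = (4/π)·((E(√(1−m²)) − m²K(√(1−m²)))/(1−m²), m(K(√(1−m²)) − E(√(1−m²)))/(1−m²))`
equals `(4/π)·∫₀^{π/2} (cos θ·cos²t, sin θ·sin²t)/√(cos²θ·cos²t + sin²θ·sin²t) dt`
(componentwise). -/
theorem stmt15 (θ : ℝ) (hθ : θ ∈ Set.Ioo 0 (π / 4)) (m : ℝ) (hm : m = Real.tan θ) :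
    (4 / π) * ((ellipticE (Real.sqrt (1 - m ^ 2)) - m ^ 2 * ellipticK (Real.sqrt (1 - m ^ 2)))
        / (1 - m ^ 2))
      = (4 / π) * ∫ t in (0:ℝ)..(π / 2),
          cos θ * cos t ^ 2 / Real.sqrt (cos θ ^ 2 * cos t ^ 2 + sin θ ^ 2 * sin t ^ 2) ∧
    (4 / π) * ((m * (ellipticK (Real.sqrt (1 - m ^ 2)) - ellipticE (Real.sqrt (1 - m ^ 2))))
        / (1 - m ^ 2))
      = (4 / π) * ∫ t in (0:ℝ)..(π / 2),
          sin θ * sin t ^ 2 / Real.sqrt (cos θ ^ 2 * cos t ^ 2 + sin θ ^ 2 * sin t ^ 2) := by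
  obtain ⟨hθ0, hθ4⟩ := hθ
  have hcos : 0 < cos θ := cos_pos_of_mem_Ioo ⟨by linarith [pi_pos], by linarith⟩
  have hm0 : 0 < m := hm ▸ tan_pos_of_pos_of_lt_pi_div_two hθ0 (by linarith)
  have hm1 : m < 1 := hm ▸ tan_pi_div_four ▸
    tan_lt_tan_of_nonneg_of_lt_pi_div_two hθ0.le (by linarith) hθ4
  have hsin : sin θ = m * cos θ := by rw [hm, tan_eq_sin_div_cos, div_mul_cancel₀ _ hcos.ne']
  have hm2 : m ^ 2 < 1 := by nlinarith
  rw [hsin, integral_mul_cos_sq_div_sqrt hcos hm0.ne' hm2,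
    integral_mul_sin_sq_div_sqrt hcos hm0.ne' hm2]
  exact ⟨rfl, rfl⟩
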